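/- Let x ∈ {1} × [n]^L, b_1 ∈ {0,1}, v ∈ V, and j ∈ [L]. Then Σ over y ∈ {1} × [n]^L with max{i : (x_1, …, x_i) = (y_1, …, y_i)} = j and over b_2 ∈ {0,1} of r̃_v((x,b_1),(y,b_2)) ≤ Σ over y ∈ {1} × [n]^L with max{i : (x_1, …, x_i) = (y_1, …, y_i)} = j and with v appearing on Tail(j, S_y) of r((x,b_1),(y,1−b_1)). -/

import Mathlib

open Finset

variable {n L : ℕ}

open Fin.NatCast in
/-- The segment of the staircase between milestones `x i` and `x (i+1)` (`0`-based `i`),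
namely the path `P^{x_i, x_{i+1}}` of the all-pairs set of paths `P`. -/
def seg (P : Fin n → Fin n → List (Fin n)) (x : Fin (L + 1) → Fin n) (i : ℕ) :
    List (Fin n) :=
  P (x i) (x (i + 1))

/-- The staircase `S_x` induced by the milestone sequence `x` and the all-pairs set of
paths `P`: the concatenation `P^{x_1,x_2} ∘ P^{x_2,x_3} ∘ ⋯ ∘ P^{x_L,x_{L+1}}` (as a walk;
each path after the first contributes everything but its first vertex). -/
def staircase (P : Fin n → Fin n → List (Fin n)) (x : Fin (L + 1) → Fin n) :
    List (Fin n) :=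
  x 0 :: ((List.range L).flatMap fun i => (seg P x i).tail)

/-- The largest (`0`-based) segment index whose path contains `v`. -/
def segIdx (P : Fin n → Fin n → List (Fin n)) (x : Fin (L + 1) → Fin n) (v : Fin n) : ℕ :=
  ((Finset.range L).filter fun i => v ∈ seg P x i).sup id

/-- The value function `f_x`: `f_x v = dist(v, 1)` if `v` is not on the staircase `S_x`,
and `f_x v = −(i·n + j)` if `v` is on `S_x`, where `i` is the maximum (1-based) index with
`v ∈ P^{x_i,x_{i+1}}` and `v` is the `j`-th vertex of `P^{x_i,x_{i+1}}`. -/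
noncomputable def fx (G : SimpleGraph (Fin n)) (P : Fin n → Fin n → List (Fin n))
    (v₁ : Fin n) (x : Fin (L + 1) → Fin n) (v : Fin n) : ℤ :=
  if v ∈ staircase P x then
    -(((segIdx P x v : ℤ) + 1) * (n : ℤ) + (((seg P x (segIdx P x v)).idxOf v : ℤ) + 1))
  else (G.dist v v₁ : ℤ)

/-- The function `g_{x,b}`, hiding the bit `b` at the last milestone `x_{L+1}` (second
component `b ∈ {0,1}` there, `−1` elsewhere). -/
noncomputable def gx (G : SimpleGraph (Fin n)) (P : Fin n → Fin n → List (Fin n))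
    (v₁ : Fin n) (x : Fin (L + 1) → Fin n) (b : Bool) (v : Fin n) : ℤ × ℤ :=
  (fx G P v₁ x v, if v = x (Fin.last L) then (if b then 1 else 0) else -1)

/-- The maximum (1-based) index `j` such that `(x_1, …, x_j) = (y_1, …, y_j)`. -/
def maxPrefix (x y : Fin (L + 1) → Fin n) : ℕ :=
  ((Finset.Icc 1 (L + 1)).filter fun j => ∀ i : Fin (L + 1), (i : ℕ) < j → x i = y i).sup id

/-- The relation `r`: zero if the bits agree or either sequence is not good (injective),
and `n ^ maxPrefix` otherwise. -/
noncomputable def rrel (p q : (Fin (L + 1) → Fin n) × Bool) : ℝ :=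
  if p.2 = q.2 ∨ ¬ Function.Injective p.1 ∨ ¬ Function.Injective q.1 then 0
  else (n : ℝ) ^ maxPrefix p.1 q.1

/-- The relation `r_v`: equal to `r` if `g_{x,b₁}(v) ≠ g_{y,b₂}(v)` and `0` otherwise. -/
noncomputable def rv (G : SimpleGraph (Fin n)) (P : Fin n → Fin n → List (Fin n))
    (v₁ v : Fin n) (p q : (Fin (L + 1) → Fin n) × Bool) : ℝ :=
  if gx G P v₁ p.1 p.2 v ≠ gx G P v₁ q.1 q.2 v then rrel p q else 0

/-- The relation `r̃_v`: equal to `r_v` if `μ(S_x, v) ≤ μ(S_y, v)` and `0` otherwise. -/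
noncomputable def rvt (G : SimpleGraph (Fin n)) (P : Fin n → Fin n → List (Fin n))
    (v₁ v : Fin n) (p q : (Fin (L + 1) → Fin n) × Bool) : ℝ :=
  if (staircase P p.1).count v ≤ (staircase P q.1).count v then rv G P v₁ v p q else 0

open Fin.NatCast in
/-- `Tail(j, S_x)` for a 1-based index `j ∈ [L]`: the walk
`P^{x_j,x_{j+1}} ∘ ⋯ ∘ P^{x_L,x_{L+1}}` with the first occurrence of `x_j` removed.
For `j = L + 1` it is the empty sequence. -/
def tailWalk (P : Fin n → Fin n → List (Fin n)) (x : Fin (L + 1) → Fin n) (j : ℕ) :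
    List (Fin n) :=
  if j ≤ L then
    (seg P x (j - 1) ++ ((List.range L).drop j).flatMap fun i => (seg P x i).tail).erase
      (x (j - 1))
  else []

/-- The vertex congestion of the all-pairs set of paths `P`:
`max_{w} Σ_{u,v} (number of occurrences of w on P^{u,v})`. -/
def congestion (P : Fin n → Fin n → List (Fin n)) : ℕ :=
  Finset.univ.sup fun w => ∑ u : Fin n, ∑ v : Fin n, (P u v).count w

/-- `N_v(u)`: the number of paths in `P` that start at `u` and contain `v`. -/
def Npaths (P : Fin n → Fin n → List (Fin n)) (v u : Fin n) : ℕ :=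
  (Finset.univ.filter fun w => v ∈ P u w).card

/-!
Write `k = j - 1` and split every staircase after its first `k` segments: `S_x = Pre_k(x) ++ Suf_k(x)`
with `Suf_k(x) = Tail(j, S_x)`. If `x` and `y` agree on their first `j` milestones, then
`Pre_k(x) = Pre_k(y)`, so the multiplicity condition of `r̃_v` together with `v ∉ Tail(j, S_y)`
forces `v ∉ Tail(j, S_x)`. A vertex missing from both tails meets the two staircases only in
their common segments or at the common milestone `x_j`, and is not the last milestone, hence
`g_{x,b₁}(v) = g_{y,b₂}(v)` and `r̃_v` vanishes. Otherwise `r̃_v ≤ r`, and the term with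
`b₂ = b₁` vanishes because `r` does.
-/

open Fin.NatCast

lemma List.mem_tail_of_head?_of_getLast? {α : Type*} {l : List α} {a b : α}
    (ha : l.head? = some a) (hb : l.getLast? = some b) (hab : a ≠ b) : b ∈ l.tail := by
  obtain ⟨t, rfl⟩ := List.head?_eq_some_iff.mp ha
  have hb_mem : b ∈ a :: t := List.mem_of_getLast? hb
  simpa [hab.symm] using hb_mem

lemma List.mem_drop_range {i k L : ℕ} : i ∈ (List.range L).drop k ↔ k ≤ i ∧ i < L := by
  rw [List.range_eq_range', List.drop_range', List.mem_range'_1]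
  omega

/-- `S_x` splits as `stairPrefix P x k ++ stairSuffix P x k` at the milestone that is `x_{k+1}` in
the paper's `1`-based numbering. -/
def stairPrefix (P : Fin n → Fin n → List (Fin n)) (x : Fin (L + 1) → Fin n) (k : ℕ) :
    List (Fin n) :=
  x 0 :: ((List.range L).take k).flatMap fun i => (seg P x i).tail

def stairSuffix (P : Fin n → Fin n → List (Fin n)) (x : Fin (L + 1) → Fin n) (k : ℕ) :
    List (Fin n) :=
  ((List.range L).drop k).flatMap fun i => (seg P x i).tail

section Staircase

variable {P : Fin n → Fin n → List (Fin n)} {x y : Fin (L + 1) → Fin n} {k : ℕ} {v : Fin n}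

lemma seg_eq_cons (hhead : ∀ u w, (P u w).head? = some u) (x : Fin (L + 1) → Fin n) (i : ℕ) :
    seg P x i = x i :: (seg P x i).tail :=
  (List.cons_head?_tail (hhead _ _)).symm

lemma staircase_eq_stairPrefix_append_stairSuffix (P : Fin n → Fin n → List (Fin n))
    (x : Fin (L + 1) → Fin n) (k : ℕ) :
    staircase P x = stairPrefix P x k ++ stairSuffix P x k := by
  rw [staircase, stairPrefix, stairSuffix, List.cons_append, ← List.flatMap_append,
    List.take_append_drop]

lemma mem_stairSuffix :
    v ∈ stairSuffix P x k ↔ ∃ i, k ≤ i ∧ i < L ∧ v ∈ (seg P x i).tail := by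
  simp only [stairSuffix, List.mem_flatMap, List.mem_drop_range, and_assoc]

lemma tailWalk_eq_stairSuffix (hhead : ∀ u w, (P u w).head? = some u) (hk : k < L) :
    tailWalk P x (k + 1) = stairSuffix P x k := by
  have hdrop : (List.range L).drop k = k :: (List.range L).drop (k + 1) := by
    rw [List.drop_eq_getElem_cons (by simpa using hk), List.getElem_range]
  have hcast : ((k + 1 : ℕ) : Fin (L + 1)) - 1 = (k : Fin (L + 1)) := by
    rw [Nat.cast_succ, add_sub_cancel_right]
  rw [tailWalk, if_pos (Nat.succ_le_of_lt hk), Nat.add_sub_cancel, stairSuffix, hdrop, List.flatMap_cons, hcast,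
    seg_eq_cons hhead x k, List.tail_cons, List.cons_append, List.erase_cons_head]

def AgreeUpTo (x y : Fin (L + 1) → Fin n) (k : ℕ) : Prop :=
  ∀ i ≤ k, x i = y i

lemma AgreeUpTo.symm (h : AgreeUpTo x y k) : AgreeUpTo y x k :=
  fun i hi => (h i hi).symm

lemma AgreeUpTo.seg_eq (h : AgreeUpTo x y k) {i : ℕ} (hi : i < k) : seg P x i = seg P y i := by
  rw [seg, seg, ← Nat.cast_succ, h i hi.le, h (i + 1) hi]

lemma AgreeUpTo.stairPrefix_eq (h : AgreeUpTo x y k) : stairPrefix P x k = stairPrefix P y k := by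
  have h0 : x 0 = y 0 := by simpa using h 0 k.zero_le
  rw [stairPrefix, stairPrefix, h0]
  refine congrArg _ (List.flatMap_congr fun i hi => ?_)
  rw [List.take_range, List.mem_range] at hi
  rw [h.seg_eq (lt_min_iff.mp hi).1]

lemma AgreeUpTo.not_mem_stairSuffix_of_count_le (h : AgreeUpTo x y k)
    (hcount : (staircase P x).count v ≤ (staircase P y).count v)
    (hv : v ∉ stairSuffix P y k) : v ∉ stairSuffix P x k := by
  rw [staircase_eq_stairPrefix_append_stairSuffix P x k,
    staircase_eq_stairPrefix_append_stairSuffix P y k, List.count_append, List.count_append,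
    h.stairPrefix_eq, List.count_eq_zero_of_not_mem hv] at hcount
  rw [← List.count_eq_zero (a := v)]
  omega

end Staircase

section Milestones

variable {P : Fin n → Fin n → List (Fin n)} {x z : Fin (L + 1) → Fin n} {k : ℕ} {v : Fin n}

lemma ne_milestone_of_not_mem_stairSuffix (hhead : ∀ u w, (P u w).head? = some u)
    (hlast : ∀ u w, (P u w).getLast? = some w) (hz : Function.Injective z)
    (hv : v ∉ stairSuffix P z k) {i : ℕ} (hki : k ≤ i) (hiL : i < L) :
    v ≠ z (i + 1 : ℕ) := by
  rintro rfl
  have hne : z i ≠ z (i + 1 : ℕ) := hz.ne fun h => by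
    have hval := congrArg Fin.val h
    rw [Fin.val_cast_of_lt (by omega), Fin.val_cast_of_lt (by omega)] at hval
    omega
  refine hv (mem_stairSuffix.mpr ⟨i, hki, hiL, ?_⟩)
  refine List.mem_tail_of_head?_of_getLast? (hhead _ _) ?_ hne
  rw [seg, Nat.cast_succ]
  exact hlast _ _

lemma ne_last_of_not_mem_stairSuffix (hhead : ∀ u w, (P u w).head? = some u)
    (hlast : ∀ u w, (P u w).getLast? = some w) (hz : Function.Injective z)
    (hv : v ∉ stairSuffix P z k) (hk : k < L) : v ≠ z (Fin.last L) := by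
  have h := ne_milestone_of_not_mem_stairSuffix hhead hlast hz hv (i := L - 1) (by omega)
    (by omega)
  rwa [Nat.sub_add_cancel (by omega), Fin.natCast_eq_last] at h

lemma lt_or_eq_milestone_of_mem_seg (hhead : ∀ u w, (P u w).head? = some u)
    (hlast : ∀ u w, (P u w).getLast? = some w) (hz : Function.Injective z)
    (hv : v ∉ stairSuffix P z k) {i : ℕ} (hiL : i < L) (hvi : v ∈ seg P z i) :
    i < k ∨ (i = k ∧ v = z k) := by
  obtain hik | hki := lt_or_ge i k
  · exact Or.inl hik
  rw [seg_eq_cons hhead] at hvi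
  obtain rfl | htail := List.mem_cons.mp hvi
  · obtain rfl | hki := hki.eq_or_lt
    · exact Or.inr ⟨rfl, rfl⟩
    obtain ⟨i, rfl⟩ : ∃ i', i = i' + 1 := ⟨i - 1, by omega⟩
    exact absurd rfl (ne_milestone_of_not_mem_stairSuffix hhead hlast hz hv (by omega) (by omega))
  · exact absurd (mem_stairSuffix.mpr ⟨i, hki, hiL, htail⟩) hv

lemma segIdx_mem_seg (hhead : ∀ u w, (P u w).head? = some u) (hL : 0 < L)
    (hv : v ∈ staircase P x) : segIdx P x v < L ∧ v ∈ seg P x (segIdx P x v) := by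
  have hne : ((range L).filter fun i => v ∈ seg P x i).Nonempty := by
    obtain rfl | hv := List.mem_cons.mp hv
    · refine ⟨0, mem_filter.mpr ⟨mem_range.mpr hL, ?_⟩⟩
      rw [seg_eq_cons hhead, Nat.cast_zero]
      exact List.mem_cons_self
    · obtain ⟨i, hi, hvi⟩ := List.mem_flatMap.mp hv
      exact ⟨i, mem_filter.mpr ⟨mem_range.mpr (List.mem_range.mp hi), List.mem_of_mem_tail hvi⟩⟩
  obtain ⟨m, hm, hsup⟩ := exists_mem_eq_sup _ hne id
  rw [segIdx, hsup]
  simpa using hm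

end Milestones

namespace AgreeUpTo

variable {P : Fin n → Fin n → List (Fin n)} {x y : Fin (L + 1) → Fin n} {k : ℕ} {v : Fin n}

lemma mem_seg_of_mem_seg (h : AgreeUpTo x y k) (hhead : ∀ u w, (P u w).head? = some u)
    (hlast : ∀ u w, (P u w).getLast? = some w) (hx : Function.Injective x)
    (hvx : v ∉ stairSuffix P x k) {i : ℕ} (hiL : i < L) (hvi : v ∈ seg P x i) :
    v ∈ seg P y i := by
  obtain hik | ⟨rfl, rfl⟩ := lt_or_eq_milestone_of_mem_seg hhead hlast hx hvx hiL hvi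
  · rwa [← h.seg_eq hik]
  · rw [seg_eq_cons hhead y, ← h i le_rfl]
    exact List.mem_cons_self

lemma idxOf_seg_eq (h : AgreeUpTo x y k) (hhead : ∀ u w, (P u w).head? = some u)
    (hlast : ∀ u w, (P u w).getLast? = some w) (hx : Function.Injective x)
    (hvx : v ∉ stairSuffix P x k) {i : ℕ} (hiL : i < L) (hvi : v ∈ seg P x i) :
    (seg P x i).idxOf v = (seg P y i).idxOf v := by
  obtain hik | ⟨rfl, rfl⟩ := lt_or_eq_milestone_of_mem_seg hhead hlast hx hvx hiL hvi
  · rw [h.seg_eq hik]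
  · rw [seg_eq_cons hhead x, seg_eq_cons hhead y, ← h i le_rfl, List.idxOf_cons_self,
      List.idxOf_cons_self]

lemma fx_eq (h : AgreeUpTo x y k) (G : SimpleGraph (Fin n)) (v₁ : Fin n)
    (hhead : ∀ u w, (P u w).head? = some u) (hlast : ∀ u w, (P u w).getLast? = some w)
    (hx : Function.Injective x) (hy : Function.Injective y) (hk : k < L)
    (hvx : v ∉ stairSuffix P x k) (hvy : v ∉ stairSuffix P y k) :
    fx G P v₁ x v = fx G P v₁ y v := by
  have hseg : ∀ i ∈ range L, v ∈ seg P x i ↔ v ∈ seg P y i := fun i hi =>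
    ⟨h.mem_seg_of_mem_seg hhead hlast hx hvx (mem_range.mp hi),
      h.symm.mem_seg_of_mem_seg hhead hlast hy hvy (mem_range.mp hi)⟩
  have hidx : segIdx P x v = segIdx P y v := by
    rw [segIdx, segIdx, filter_congr hseg]
  have hstair : v ∈ staircase P x ↔ v ∈ staircase P y := by
    rw [staircase_eq_stairPrefix_append_stairSuffix P x k,
      staircase_eq_stairPrefix_append_stairSuffix P y k, List.mem_append, List.mem_append,
      h.stairPrefix_eq, or_iff_left hvx, or_iff_left hvy]
  by_cases hv : v ∈ staircase P x
  · obtain ⟨hlt, hmem⟩ := segIdx_mem_seg hhead (by omega) hv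
    rw [fx, fx, if_pos hv, if_pos (hstair.mp hv), ← hidx,
      h.idxOf_seg_eq hhead hlast hx hvx hlt hmem]
  · rw [fx, fx, if_neg hv, if_neg (hstair.not.mp hv)]

lemma gx_eq (h : AgreeUpTo x y k) (G : SimpleGraph (Fin n)) (v₁ : Fin n)
    (hhead : ∀ u w, (P u w).head? = some u) (hlast : ∀ u w, (P u w).getLast? = some w)
    (hx : Function.Injective x) (hy : Function.Injective y) (hk : k < L)
    (hvx : v ∉ stairSuffix P x k) (hvy : v ∉ stairSuffix P y k) (b₁ b₂ : Bool) :
    gx G P v₁ x b₁ v = gx G P v₁ y b₂ v := by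
  rw [gx, gx, h.fx_eq G v₁ hhead hlast hx hy hk hvx hvy,
    if_neg (ne_last_of_not_mem_stairSuffix hhead hlast hx hvx hk),
    if_neg (ne_last_of_not_mem_stairSuffix hhead hlast hy hvy hk)]

lemma rvt_eq_zero (h : AgreeUpTo x y k) (G : SimpleGraph (Fin n)) (v₁ : Fin n)
    (hhead : ∀ u w, (P u w).head? = some u) (hlast : ∀ u w, (P u w).getLast? = some w)
    (hk : k < L) (hvy : v ∉ stairSuffix P y k) (b₁ b₂ : Bool) :
    rvt G P v₁ v (x, b₁) (y, b₂) = 0 := by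
  unfold rvt rv rrel
  split_ifs with hcount hg hdeg <;> try rfl
  simp only [not_or, not_not] at hdeg
  have hvx := h.not_mem_stairSuffix_of_count_le hcount hvy
  exact absurd (h.gx_eq G v₁ hhead hlast hdeg.2.1 hdeg.2.2 hk hvx hvy b₁ b₂) hg

end AgreeUpTo

lemma eq_of_lt_maxPrefix {x y : Fin (L + 1) → Fin n} {i : Fin (L + 1)}
    (hi : (i : ℕ) < maxPrefix x y) : x i = y i := by
  obtain hs | hs :=
    ((Icc 1 (L + 1)).filter fun j => ∀ i : Fin (L + 1), (i : ℕ) < j → x i = y i).eq_empty_or_nonempty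
  · rw [maxPrefix, hs, sup_empty] at hi
    exact absurd hi (Nat.not_lt_zero _)
  · obtain ⟨m, hm, hsup⟩ := exists_mem_eq_sup _ hs id
    rw [maxPrefix, hsup] at hi
    exact (mem_filter.mp hm).2 i hi

lemma agreeUpTo_of_maxPrefix_eq {x y : Fin (L + 1) → Fin n} {k : ℕ} (hk : k < L)
    (hm : maxPrefix x y = k + 1) : AgreeUpTo x y k := fun i hi =>
  eq_of_lt_maxPrefix (by rw [Fin.val_cast_of_lt (by omega), hm]; omega)

section Relations

variable (G : SimpleGraph (Fin n)) (P : Fin n → Fin n → List (Fin n)) (v₁ v : Fin n)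

lemma rrel_nonneg (p q : (Fin (L + 1) → Fin n) × Bool) : 0 ≤ rrel p q := by
  unfold rrel
  split_ifs
  exacts [le_rfl, by positivity]

lemma rvt_le_rrel (p q : (Fin (L + 1) → Fin n) × Bool) : rvt G P v₁ v p q ≤ rrel p q := by
  unfold rvt rv
  split_ifs <;> first | exact le_rfl | exact rrel_nonneg p q

lemma sum_rvt_bool (x y : Fin (L + 1) → Fin n) (b₁ : Bool) :
    ∑ b₂ : Bool, rvt G P v₁ v (x, b₁) (y, b₂) = rvt G P v₁ v (x, b₁) (y, !b₁) := by
  have hsame : rvt G P v₁ v (x, b₁) (y, b₁) = 0 := by simp [rvt, rv, rrel]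
  rw [Fintype.sum_bool]
  cases b₁ <;> simp [hsame]

end Relations

theorem stmt13_general (hn : 0 < n)
    (G : SimpleGraph (Fin n))
    (P : Fin n → Fin n → List (Fin n))
    (hhead : ∀ u v, (P u v).head? = some u)
    (hlast : ∀ u v, (P u v).getLast? = some v)
    (x : Fin (L + 1) → Fin n)
    (b₁ : Bool) (v : Fin n) (j : ℕ) (hj1 : 1 ≤ j) (hjL : j ≤ L) :
    ∑ y ∈ Finset.univ.filter
        (fun y : Fin (L + 1) → Fin n => y 0 = (⟨0, hn⟩ : Fin n) ∧ maxPrefix x y = j),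
      ∑ b₂ : Bool, rvt G P ⟨0, hn⟩ v (x, b₁) (y, b₂) ≤
    ∑ y ∈ Finset.univ.filter
        (fun y : Fin (L + 1) → Fin n =>
          y 0 = (⟨0, hn⟩ : Fin n) ∧ maxPrefix x y = j ∧ v ∈ tailWalk P y j),
      rrel (x, b₁) (y, !b₁) := by
  obtain ⟨k, rfl⟩ : ∃ k, j = k + 1 := ⟨j - 1, by omega⟩
  have hk : k < L := hjL
  rw [sum_filter, sum_filter]
  refine sum_le_sum fun y _ => ?_
  by_cases hy : y 0 = ⟨0, hn⟩ ∧ maxPrefix x y = k + 1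
  · rw [if_pos hy, sum_rvt_bool]
    by_cases hv : v ∈ tailWalk P y (k + 1)
    · rw [if_pos ⟨hy.1, hy.2, hv⟩]
      exact rvt_le_rrel G P _ v _ _
    · have hv' : v ∉ stairSuffix P y k := by rwa [← tailWalk_eq_stairSuffix hhead hk]
      rw [if_neg fun h => hv h.2.2,
        (agreeUpTo_of_maxPrefix_eq hk hy.2).rvt_eq_zero G _ hhead hlast hk hv' _ _]
  · rw [if_neg hy, if_neg fun h => hy ⟨h.1, h.2.1⟩]

/-- Let `x ∈ {1} × [n]^L`, `b₁ ∈ {0,1}`, `v ∈ V`, and `j ∈ [L]`.  Then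
the sum over `y ∈ {1} × [n]^L` with `maxPrefix x y = j` and over `b₂ ∈ {0,1}` of
`r̃_v((x,b₁),(y,b₂))` is at most the sum over `y ∈ {1} × [n]^L` with `maxPrefix x y = j`
and `v` appearing on `Tail(j, S_y)` of `r((x,b₁),(y,1−b₁))`. -/
theorem stmt13 (hn : 0 < n) (hL : 0 < L)
    (G : SimpleGraph (Fin n)) (hconn : G.Connected)
    (P : Fin n → Fin n → List (Fin n))
    (hhead : ∀ u v, (P u v).head? = some u)
    (hlast : ∀ u v, (P u v).getLast? = some v)
    (hchain : ∀ u v, (P u v).Chain' G.Adj)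
    (hnodup : ∀ u v, (P u v).Nodup)
    (hself : ∀ u, P u u = [u])
    (x : Fin (L + 1) → Fin n) (hx0 : x 0 = (⟨0, hn⟩ : Fin n))
    (b₁ : Bool) (v : Fin n) (j : ℕ) (hj1 : 1 ≤ j) (hjL : j ≤ L) :
    ∑ y ∈ Finset.univ.filter
        (fun y : Fin (L + 1) → Fin n => y 0 = (⟨0, hn⟩ : Fin n) ∧ maxPrefix x y = j),
      ∑ b₂ : Bool, rvt G P ⟨0, hn⟩ v (x, b₁) (y, b₂) ≤
    ∑ y ∈ Finset.univ.filter
        (fun y : Fin (L + 1) → Fin n =>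
          y 0 = (⟨0, hn⟩ : Fin n) ∧ maxPrefix x y = j ∧ v ∈ tailWalk P y j),
      rrel (x, b₁) (y, !b₁) :=
  stmt13_general hn G P hhead hlast x b₁ v j hj1 hjL
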